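/- arXiv:0804.3962 — 4 statements merged into one kernel-verified Lean document; each statement's English description precedes it below -/
import Mathlib

section
/- If G is a finitely generated nilpotent group whose center is finite, then G itself is finite. -/
/-!
Climb the upper central series `1 = Z₀ ≤ Z₁ ≤ ⋯ ≤ Zₙ = G`. If `S` is a finite generating set,
then `g ↦ (⁅g, s⁆)_{s ∈ S}` maps `Z_{k+1}` into the finite set `Z_k ^ S`, and two elements with the
same image commute with every generator, so they differ by a central element. Thus each fibre
is contained in a coset of the finite centre, and by induction every `Z_k` is finite.
-/

open Subgroup
open scoped commutatorElement

section

variable {G : Type*} [Group G]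

theorem Set.Finite.of_map_eq_imp_inv_mul_mem {X : Type*} {s : Set G} {K : Subgroup G}
    [Finite K] (f : G → X) (himage : (f '' s).Finite)
    (hfibre : ∀ a ∈ s, ∀ b ∈ s, f a = f b → a⁻¹ * b ∈ K) : s.Finite := by
  refine Set.Finite.of_finite_fibers f himage ?_
  rintro _ ⟨a, ha, rfl⟩
  refine ((Set.toFinite (K : Set G)).image (a * ·)).subset ?_
  rintro b ⟨hb, hfb⟩
  exact ⟨a⁻¹ * b, hfibre a ha b hb hfb.symm, mul_inv_cancel_left a b⟩

theorem Subgroup.mem_center_of_forall_commute {S : Set G} (hS : closure S = ⊤) {g : G}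
    (hg : ∀ s ∈ S, Commute s g) : g ∈ center G := by
  rw [← centralizer_univ, ← coe_top, ← hS, centralizer_closure]
  exact mem_centralizer_iff.mpr hg

theorem commute_inv_mul_of_commutatorElement_eq {a b s : G} (h : ⁅a, s⁆ = ⁅b, s⁆) :
    Commute s (a⁻¹ * b) := by
  rw [commutatorElement_def, commutatorElement_def] at h
  calc s * (a⁻¹ * b) = a⁻¹ * (a * s * a⁻¹ * s⁻¹) * s * b := by group
    _ = a⁻¹ * (b * s * b⁻¹ * s⁻¹) * s * b := by rw [h]
    _ = a⁻¹ * b * s := by group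

theorem Subgroup.finite_of_commutator_generators_mem [Finite (center G)] {S : Set G}
    (hS : closure S = ⊤) (hSfin : S.Finite) {H N : Subgroup G} [Finite N]
    (hHN : ∀ h ∈ H, ∀ s ∈ S, ⁅h, s⁆ ∈ N) : Finite H := by
  have := hSfin.to_subtype
  let f : G → S → G := fun g s ↦ ⁅g, (s : G)⁆
  have himage : (f '' H).Finite :=
    (Set.Finite.pi (t := fun _ : S ↦ (N : Set G)) fun _ ↦ Set.toFinite _).subset <| by
      rintro _ ⟨h, hh, rfl⟩ s -
      exact hHN h hh s s.2
  refine Set.finite_coe_iff.mpr <| Set.Finite.of_map_eq_imp_inv_mul_mem (K := center G) f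
    himage fun a _ b _ hab ↦ mem_center_of_forall_commute hS fun s hs ↦ ?_
  exact commute_inv_mul_of_commutatorElement_eq (congrFun hab ⟨s, hs⟩)

theorem Subgroup.finite_upperCentralSeries [Group.FG G] [Finite (center G)] (n : ℕ) :
    Finite (upperCentralSeries G n) := by
  obtain ⟨S, hS, hSfin⟩ := Group.fg_iff.mp ‹Group.FG G›
  induction n with
  | zero => rw [upperCentralSeries_zero]; infer_instance
  | succ n ih =>
    exact finite_of_commutator_generators_mem hS hSfin fun h hh s _ ↦
      mem_upperCentralSeries_succ_iff.mp hh s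

end

theorem finite_of_fg_nilpotent_finite_center {G : Type*} [Group G]
    [Group.IsNilpotent G] [Group.FG G] (h : Finite (Subgroup.center G)) :
    Finite G := by
  have := finite_upperCentralSeries (G := G) (Group.nilpotencyClass G)
  rw [Subgroup.upperCentralSeries_nilpotencyClass] at this
  exact Finite.of_equiv _ Subgroup.topEquiv.toEquiv
end

section
/- If G is a nilpotent group and the centralizer of some finitely generated subgroup of G satisfies the maximal condition on subgroups (every subgroup is finitely generated), then G satisfies the maximal condition on subgroups. -/
/-!
Induct on the nilpotency class through `G ⧸ Z(G)`. Since `Z(G) ≤ C_G(H)`, the center satisfies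
max, and max passes to subgroups, quotients and extensions; so it suffices to show that the image
`H̄` of `H` again has a centralizer with max. Let `D` be the preimage of `C(H̄)`. For each of
the finitely many generators `a` of `H`, commutators `⁅d, a⁆` with `d ∈ D` are central, so
`d ↦ ⁅d, a⁆` is a homomorphism into `Z(G)` with kernel `D ∩ C(a)`. Hence `D` is obtained from
`D ∩ C_G(H)` by finitely many extensions by subgroups of `Z(G)`, and `C(H̄)`, the image of `D`,
satisfies max.
-/

open Subgroup
open scoped commutatorElement

namespace Subgroup

variable {G Q : Type*} [Group G] [Group Q]

theorem FG.map {K : Subgroup G} (hK : K.FG) (f : G →* Q) : (K.map f).FG := by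
  obtain ⟨S, rfl⟩ := hK
  exact (fg_iff _).2 ⟨f '' S, (MonoidHom.map_closure f S).symm, S.finite_toSet.image f⟩

theorem FG.of_map_injective {K : Subgroup G} (f : G →* Q) (hf : Function.Injective f)
    (h : (K.map f).FG) : K.FG := by
  rw [fg_iff_submonoid_fg] at h ⊢
  exact h.map_injective f hf

theorem fg_of_fg_map_of_fg_inf_ker (f : G →* Q) {K : Subgroup G} (hmap : (K.map f).FG)
    (hker : (K ⊓ f.ker).FG) : K.FG := by
  obtain ⟨T, hT, hTfin⟩ := (fg_iff _).1 hmap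
  obtain ⟨U, hUK, hUfin, hUT⟩ : ∃ U ⊆ (K : Set G), U.Finite ∧ closure (f '' U) = K.map f :=
    Set.exists_subset_image_finite_and (p := fun V ↦ closure V = K.map f) |>.1
      ⟨T, fun y hy ↦ by rw [← coe_map, ← hT]; exact subset_closure hy, hTfin, hT⟩
  have hUK' : closure U ≤ K := (closure_le K).2 hUK
  suffices hKU : K = (K ⊓ f.ker) ⊔ closure U from
    hKU ▸ hker.sup ((fg_iff _).2 ⟨U, rfl, hUfin⟩)
  refine le_antisymm (fun k hk ↦ ?_) (sup_le inf_le_left hUK')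
  obtain ⟨j, hj, hjk⟩ : f k ∈ (closure U).map f := by
    rw [MonoidHom.map_closure, hUT]
    exact mem_map_of_mem f hk
  have hkj : k * j⁻¹ ∈ K ⊓ f.ker :=
    mem_inf.2 ⟨mul_mem hk (inv_mem (hUK' hj)), by simp [hjk]⟩
  simpa using mul_mem (mem_sup_left hkj) (mem_sup_right hj)

theorem centralizer_insert (a : G) (s : Set G) :
    centralizer (insert a s) = centralizer {a} ⊓ centralizer s := by
  rw [Set.insert_eq]
  exact SetLike.ext' (Set.centralizer_union ..)

end Subgroup

namespace Group

def MaxCondition (G : Type*) [Group G] : Prop :=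
  ∀ K : Subgroup G, K.FG

variable {G Q : Type*} [Group G] [Group Q]

theorem maxCondition_of_subsingleton [Subsingleton G] : MaxCondition G :=
  fun K ↦ Subsingleton.elim ⊥ K ▸ FG.bot

theorem MaxCondition.fg_of_le {N K : Subgroup G} (hN : MaxCondition N) (hK : K ≤ N) : K.FG := by
  simpa [subgroupOf_map_subtype, inf_eq_left.2 hK] using (hN (K.subgroupOf N)).map N.subtype

theorem maxCondition_of_injective {N : Subgroup Q} (f : G →* Q) (hf : Function.Injective f)
    (hfN : f.range ≤ N) (hN : MaxCondition N) : MaxCondition G :=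
  fun K ↦ FG.of_map_injective f hf (hN.fg_of_le ((map_le_range f K).trans hfN))

theorem MaxCondition.of_le {N M : Subgroup G} (hNM : N ≤ M) (hM : MaxCondition M) :
    MaxCondition N :=
  maxCondition_of_injective N.subtype N.subtype_injective (by rwa [range_subtype]) hM

theorem maxCondition_of_surjective (f : G →* Q) (hf : Function.Surjective f)
    (hG : MaxCondition G) : MaxCondition Q :=
  fun K ↦ map_comap_eq_self_of_surjective hf K ▸ (hG (K.comap f)).map f

theorem MaxCondition.map {N : Subgroup G} (hN : MaxCondition N) (f : G →* Q) :
    MaxCondition (N.map f) :=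
  maxCondition_of_surjective _ (f.subgroupMap_surjective N) hN

theorem maxCondition_of_ker (f : G →* Q) (hker : MaxCondition f.ker) (hQ : MaxCondition Q) :
    MaxCondition G :=
  fun K ↦ fg_of_fg_map_of_fg_inf_ker f (hQ (K.map f)) (hker.fg_of_le inf_le_right)

def commutatorHomOfCentral (A : Subgroup G) (a : G) (hA : ∀ x ∈ A, ⁅x, a⁆ ∈ center G) :
    A →* center G where
  toFun x := ⟨⁅(x : G), a⁆, hA x x.2⟩
  map_one' := by ext; simp
  map_mul' x y := by
    ext
    have hy := mem_center_iff.1 (hA y y.2)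
    simp only [coe_mul, commutatorElement_mul_left_eq_conj_mul, hy, mul_inv_cancel_right]

theorem ker_commutatorHomOfCentral (A : Subgroup G) (a : G)
    (hA : ∀ x ∈ A, ⁅x, a⁆ ∈ center G) :
    (commutatorHomOfCentral A a hA).ker = (centralizer {a}).subgroupOf A := by
  ext x
  simp [commutatorHomOfCentral, MonoidHom.mem_ker, mem_subgroupOf,
    mem_centralizer_iff_commutator_eq_one', Subtype.ext_iff]

theorem MaxCondition.of_commutator_mem_center {A : Subgroup G} {a : G}
    (hA : ∀ x ∈ A, ⁅x, a⁆ ∈ center G) (hZ : MaxCondition (center G))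
    (hAa : MaxCondition ↥(A ⊓ centralizer {a})) : MaxCondition A := by
  refine maxCondition_of_ker (commutatorHomOfCentral A a hA) ?_ hZ
  rw [ker_commutatorHomOfCentral]
  refine maxCondition_of_injective (A.subtype.comp (Subgroup.subtype _))
    (A.subtype_injective.comp (Subgroup.subtype_injective _)) ?_ hAa
  rintro _ ⟨x, rfl⟩
  exact mem_inf.2 ⟨x.1.2, x.2⟩

theorem MaxCondition.of_commutator_mem_center_of_finset {D : Subgroup G} (S : Finset G)
    (hS : ∀ d ∈ D, ∀ a ∈ S, ⁅d, a⁆ ∈ center G) (hZ : MaxCondition (center G))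
    (hDS : MaxCondition ↥(D ⊓ centralizer (S : Set G))) : MaxCondition D := by
  classical
  induction S using Finset.induction_on with
  | empty =>
    rwa [Finset.coe_empty, centralizer_eq_top_iff_subset.2 (Set.empty_subset _), inf_top_eq] at hDS
  | insert a T _ ih =>
    refine ih (fun d hd b hb ↦ hS d hd b (Finset.mem_insert_of_mem hb)) ?_
    refine .of_commutator_mem_center
      (fun x hx ↦ hS x (mem_inf.1 hx).1 a (Finset.mem_insert_self a T)) hZ ?_
    rwa [inf_assoc, inf_comm (centralizer _), ← centralizer_insert, ← Finset.coe_insert]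

theorem MaxCondition.centralizer_map_mk'_center {H : Subgroup G} (hH : H.FG)
    (hC : MaxCondition (centralizer (H : Set G))) :
    MaxCondition (centralizer (H.map (QuotientGroup.mk' (center G)) : Set (G ⧸ center G))) := by
  set π := QuotientGroup.mk' (center G)
  set D := (centralizer (H.map π : Set (G ⧸ center G))).comap π
  obtain ⟨S, rfl⟩ := hH
  have hcomm : ∀ d ∈ D, ∀ a ∈ S, ⁅d, a⁆ ∈ center G := by
    intro d hd a ha
    rw [← QuotientGroup.ker_mk' (center G), MonoidHom.mem_ker, map_commutatorElement,
      commutatorElement_eq_one_iff_commute]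
    exact (mem_centralizer_iff.1 hd (π a) (mem_map_of_mem π (subset_closure ha))).symm
  have hD : MaxCondition D := .of_commutator_mem_center_of_finset S hcomm
    (hC.of_le (center_le_centralizer _))
    (hC.of_le (by rw [centralizer_closure]; exact inf_le_right))
  rw [← map_comap_eq_self_of_surjective (QuotientGroup.mk'_surjective _) (centralizer _)]
  exact hD.map π

end Group

theorem max_condition_of_centralizer_max_condition {G : Type*} [Group G]
    [Group.IsNilpotent G] (H : Subgroup G) (hH : H.FG)
    (hC : ∀ K : Subgroup (Subgroup.centralizer (H : Set G)), K.FG) :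
    ∀ K : Subgroup G, K.FG := by
  refine Group.nilpotent_center_quotient_ind
    (P := fun G _ _ ↦ ∀ H : Subgroup G, H.FG →
      Group.MaxCondition (Subgroup.centralizer (H : Set G)) → Group.MaxCondition G)
    G (fun _ _ _ _ _ _ ↦ Group.maxCondition_of_subsingleton) (fun G _ _ ih H hH hC ↦ ?_) H hH hC
  refine Group.maxCondition_of_ker (QuotientGroup.mk' (Subgroup.center G)) ?_
    (ih _ (hH.map _) (hC.centralizer_map_mk'_center hH))
  rw [QuotientGroup.ker_mk']
  exact hC.of_le (Subgroup.center_le_centralizer _)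
end

section
/- Let G be a group and {G_α}_{α ∈ I} a directed local system of subgroups whose union is G (every two members are contained in a third). If I = I₁ ∪ ⋯ ∪ I_k is a finite partition of the index set, then for at least one j, the union of {G_β : β ∈ I_j} still equals G and {G_β : β ∈ I_j} is directed, i.e., it is again a local system for G. -/
theorem local_system_partition {G : Type*} [Group G] {ι : Type*}
    (Gα : ι → Subgroup G)
    (hcover : ∀ g : G, ∃ α, g ∈ Gα α)
    (hdir : ∀ α β, ∃ γ, Gα α ≤ Gα γ ∧ Gα β ≤ Gα γ)
    (k : ℕ) (f : ι → Fin k) :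
    ∃ j : Fin k,
      (∀ g : G, ∃ β, f β = j ∧ g ∈ Gα β) ∧
      (∀ β γ, f β = j → f γ = j →
        ∃ δ, f δ = j ∧ Gα β ≤ Gα δ ∧ Gα γ ≤ Gα δ) := by
  classical
  obtain ⟨α₀, -⟩ := hcover 1
  -- finite directedness
  have hfin : ∀ s : Finset ι, ∃ γ, ∀ α ∈ s, Gα α ≤ Gα γ := by
    intro s
    induction s using Finset.induction_on with
    | empty => exact ⟨α₀, by simp⟩
    | @insert a s _ ih =>
      obtain ⟨γ, hγ⟩ := ih
      obtain ⟨δ, hδ1, hδ2⟩ := hdir a γ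
      exact ⟨δ, by
        intro α hα
        rcases Finset.mem_insert.mp hα with h | h
        · exact h ▸ hδ1
        · exact (hγ α h).trans hδ2⟩
  -- some class is cofinal
  have hcof : ∃ j : Fin k, ∀ α, ∃ β, f β = j ∧ Gα α ≤ Gα β := by
    by_contra h
    push_neg at h
    choose c hc using h
    obtain ⟨γ, hγ⟩ := hfin (Finset.image c Finset.univ)
    exact hc (f γ) γ rfl (hγ (c (f γ)) (Finset.mem_image_of_mem c (Finset.mem_univ _)))
  obtain ⟨j, hj⟩ := hcof
  refine ⟨j, ?_, ?_⟩
  · intro g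
    obtain ⟨α, hα⟩ := hcover g
    obtain ⟨β, hβ1, hβ2⟩ := hj α
    exact ⟨β, hβ1, hβ2 hα⟩
  · intro β γ _ _
    obtain ⟨ε, hε1, hε2⟩ := hdir β γ
    obtain ⟨δ, hδ1, hδ2⟩ := hj ε
    exact ⟨δ, hδ1, hε1.trans hδ2, hε2.trans hδ2⟩
end

section
/- Let G be a nontrivial locally nilpotent group and N a finitely generated subgroup of G such that the centralizer C_G(N) is finite. Then the center Z(G) of G is nontrivial, i.e. Z(G) ≠ 1. -/
/-- The sup of two finitely generated subgroups is finitely generated. -/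
lemma my_fg_sup {G : Type*} [Group G] {H K : Subgroup G} (hH : H.FG) (hK : K.FG) :
    (H ⊔ K).FG := by
  rw [Subgroup.fg_iff] at hH hK ⊢
  obtain ⟨S, hS, hSfin⟩ := hH
  obtain ⟨T, hT, hTfin⟩ := hK
  exact ⟨S ∪ T, by rw [Subgroup.closure_union, hS, hT], hSfin.union hTfin⟩

lemma my_fg_closure_singleton {G : Type*} [Group G] (a : G) :
    (Subgroup.closure ({a} : Set G)).FG :=
  (Subgroup.fg_iff _).mpr ⟨{a}, rfl, Set.finite_singleton a⟩

/-- A nontrivial nilpotent group has nontrivial center. -/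
lemma my_center_ne_bot {H : Type*} [Group H] [Group.IsNilpotent H]
    (h : (⊤ : Subgroup H) ≠ ⊥) : Subgroup.center H ≠ ⊥ := by
  obtain ⟨n, hn⟩ := nilpotent_iff_lowerCentralSeries.mp ‹Group.IsNilpotent H›
  -- take the minimal n with (⊤ : Subgroup H).lowerCentralSeries n = ⊥
  have hex : ∃ n, (⊤ : Subgroup H).lowerCentralSeries n = ⊥ := ⟨n, hn⟩
  classical
  set m := Nat.find hex with hm
  have hmspec : (⊤ : Subgroup H).lowerCentralSeries m = ⊥ := Nat.find_spec hex
  have hm0 : m ≠ 0 := by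
    intro h0
    rw [h0, Subgroup.lowerCentralSeries_zero] at hmspec
    exact h hmspec
  obtain ⟨k, hk⟩ := Nat.exists_eq_succ_of_ne_zero hm0
  have hklt : (⊤ : Subgroup H).lowerCentralSeries k ≠ ⊥ := Nat.find_min hex (by omega)
  have hcomm : ⁅(⊤ : Subgroup H).lowerCentralSeries k, (⊤ : Subgroup H)⁆ = ⊥ := by
    have : (⊤ : Subgroup H).lowerCentralSeries (k + 1) = ⁅(⊤ : Subgroup H).lowerCentralSeries k, (⊤ : Subgroup H)⁆ := rfl
    rw [← this]; rw [hk] at hmspec; exact hmspec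
  have hle : (⊤ : Subgroup H).lowerCentralSeries k ≤ Subgroup.centralizer ((⊤ : Subgroup H) : Set H) :=
    (Subgroup.commutator_eq_bot_iff_le_centralizer).mp hcomm
  rw [Subgroup.coe_top, Subgroup.centralizer_univ] at hle
  intro hbot
  exact hklt (le_bot_iff.mp (hbot ▸ hle))

theorem center_nontrivial_of_finite_centralizer {G : Type*} [Group G]
    (hln : ∀ S : Subgroup G, S.FG → Group.IsNilpotent S)
    (N : Subgroup G) (hN : N.FG)
    (hC : Finite (Subgroup.centralizer (N : Set G)))
    (hG : (⊤ : Subgroup G) ≠ ⊥) :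
    Subgroup.center G ≠ ⊥ := by
  classical
  set C := Subgroup.centralizer (N : Set G) with hCdef
  obtain ⟨x₀, hx₀⟩ := Subgroup.ne_bot_iff_exists_ne_one.mp hG
  have hx₀ne : (x₀ : G) ≠ 1 := by
    intro h1; exact hx₀ (Subtype.ext h1)
  -- For a subgroup L, D L = C ⊓ centralizer L
  set D : Subgroup G → Subgroup G := fun L => C ⊓ Subgroup.centralizer (L : Set G) with hDdef
  have hDfin : ∀ L, ((D L : Subgroup G) : Set G).Finite := by
    intro L
    have hCfin : ((C : Subgroup G) : Set G).Finite := Set.toFinite _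
    exact hCfin.subset (fun x hx => hx.1)
  -- the set of attainable cardinalities
  set s : Set ℕ :=
    {n | ∃ L : Subgroup G, N ≤ L ∧ (x₀ : G) ∈ L ∧ L.FG ∧ Nat.card (D L) = n} with hsdef
  have hs : s.Nonempty := by
    refine ⟨Nat.card (D (N ⊔ Subgroup.closure {(x₀ : G)})), N ⊔ Subgroup.closure {(x₀ : G)},
      le_sup_left, ?_, ?_, rfl⟩
    · exact Subgroup.mem_sup_right (Subgroup.subset_closure rfl)
    · exact my_fg_sup hN (my_fg_closure_singleton _)
  obtain ⟨L0, hNL0, hxL0, hFG, hcard⟩ : sInf s ∈ s := Nat.sInf_mem hs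
  -- L0 is nontrivial nilpotent, so its center is nontrivial
  haveI : Group.IsNilpotent L0 := hln L0 hFG
  have htopL0 : (⊤ : Subgroup L0) ≠ ⊥ := by
    intro hb
    have : (⟨(x₀ : G), hxL0⟩ : L0) ∈ (⊥ : Subgroup L0) := hb ▸ Subgroup.mem_top _
    rw [Subgroup.mem_bot] at this
    exact hx₀ne (congrArg Subtype.val this)
  obtain ⟨z', hz'⟩ := Subgroup.ne_bot_iff_exists_ne_one.mp (my_center_ne_bot htopL0)
  set z : G := ((z' : L0) : G) with hzdef
  have hz1 : z ≠ 1 := by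
    intro h1
    exact hz' (Subtype.ext (Subtype.ext h1))
  have hzcentL0 : ∀ h ∈ L0, h * z = z * h := by
    intro h hh
    have := (Subgroup.mem_center_iff.mp z'.2) ⟨h, hh⟩
    exact congrArg Subtype.val this
  have hzD : z ∈ D L0 := by
    constructor
    · exact Subgroup.mem_centralizer_iff.mpr (fun h hh => hzcentL0 h (hNL0 hh))
    · exact Subgroup.mem_centralizer_iff.mpr (fun h hh => hzcentL0 h hh)
  -- z is central in G
  have hzcenter : z ∈ Subgroup.center G := by
    rw [Subgroup.mem_center_iff]
    intro g
    set L1 : Subgroup G := L0 ⊔ Subgroup.closure {g} with hL1def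
    have hL01 : L0 ≤ L1 := le_sup_left
    have hD10 : D L1 ≤ D L0 :=
      inf_le_inf le_rfl (Subgroup.centralizer_le (SetLike.coe_subset_coe.mpr hL01))
    have hmem : Nat.card (D L1) ∈ s := by
      exact ⟨L1, le_trans hNL0 hL01, hL01 hxL0,
        my_fg_sup hFG (my_fg_closure_singleton _), rfl⟩
    have h1 : Nat.card (D L0) ≤ Nat.card (D L1) := hcard ▸ Nat.sInf_le hmem
    have h2 : ((D L1 : Subgroup G) : Set G) = ((D L0 : Subgroup G) : Set G) := by
      apply Set.eq_of_subset_of_ncard_le (SetLike.coe_subset_coe.mpr hD10) ?_ (hDfin L0)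
      rw [← Nat.card_coe_set_eq, ← Nat.card_coe_set_eq]
      exact h1
    have hzD1 : z ∈ D L1 := by
      have : z ∈ ((D L0 : Subgroup G) : Set G) := hzD
      rw [← h2] at this
      exact this
    have hgL1 : g ∈ L1 := Subgroup.mem_sup_right (Subgroup.subset_closure rfl)
    exact Subgroup.mem_centralizer_iff.mp hzD1.2 g hgL1
  exact Subgroup.ne_bot_iff_exists_ne_one.mpr ⟨⟨z, hzcenter⟩, fun h => hz1 (congrArg Subtype.val h)⟩
end
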